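/- Let G be a connected bipartite distance-hereditary graph and let e = xy be a bisimplicial edge of G. Then e is a cut-edge of the pivot graph G^{e}, i.e., removing e from G^{e} disconnects G^{e}. -/

import Mathlib

open SimpleGraph

variable {α β : Type*}

/-- `G` contains an induced copy of `H`. -/
def HasInducedCopy (H : SimpleGraph β) (G : SimpleGraph α) : Prop :=
  ∃ f : β ↪ α, ∀ a b, G.Adj (f a) (f b) ↔ H.Adj a b

/-- The graph `2K₂`: two disjoint edges on four vertices. -/
def twoK2Graph : SimpleGraph (Fin 4) :=
  SimpleGraph.fromEdgeSet {s(0, 1), s(2, 3)}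

/-- The domino: a 6-cycle together with a chord joining two antipodal vertices. -/
def dominoGraph : SimpleGraph (Fin 6) :=
  SimpleGraph.fromEdgeSet {s(0, 1), s(1, 2), s(2, 3), s(3, 4), s(4, 5), s(5, 0), s(0, 3)}

/-- The arrow: a 4-cycle with two pendant vertices attached to two vertices of
the same color class. -/
def arrowGraph : SimpleGraph (Fin 6) :=
  SimpleGraph.fromEdgeSet {s(0, 1), s(1, 2), s(2, 3), s(3, 0), s(0, 4), s(2, 5)}

/-- `T₂`: the subdivision of the claw `K_{1,3}` obtained by inserting one new vertex
into each edge. -/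
def t2Graph : SimpleGraph (Fin 7) :=
  SimpleGraph.fromEdgeSet {s(0, 1), s(0, 2), s(0, 3), s(1, 4), s(2, 5), s(3, 6)}

/-- `G` has a hole: an induced chordless cycle of length at least 6. -/
def HasHole (G : SimpleGraph α) : Prop :=
  ∃ n, 6 ≤ n ∧ HasInducedCopy (SimpleGraph.cycleGraph n) G

/-- Bipartite distance-hereditary graph, via the forbidden induced subgraph
characterization: connected, bipartite, with no induced hole and no induced domino. -/
def IsBDH (G : SimpleGraph α) : Prop :=
  G.Connected ∧ G.Colorable 2 ∧ ¬ HasHole G ∧ ¬ HasInducedCopy dominoGraph G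

/-- The pivot `G^{uv}` of a graph on the pair `u v`: complement all edges between
`N(u) \ {v}` and `N(v) \ {u}`. -/
def gpivot (G : SimpleGraph α) (u v : α) : SimpleGraph α where
  Adj a b := a ≠ b ∧ Xor' (G.Adj a b)
    ((G.Adj u a ∧ a ≠ v ∧ G.Adj v b ∧ b ≠ u) ∨ (G.Adj u b ∧ b ≠ v ∧ G.Adj v a ∧ a ≠ u))
  symm := ⟨by
    intro a b h
    refine ⟨h.1.symm, ?_⟩
    have hx := h.2
    rw [G.adj_comm b a, or_comm]
    exact hx⟩
  loopless := ⟨fun a h => h.1 rfl⟩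

/-- `A`, `B` are the color classes of a bipartition of `G`. -/
def IsBipartitionWith (G : SimpleGraph α) (A B : Set α) : Prop :=
  (∀ v, v ∈ A ∨ v ∈ B) ∧ (∀ v, ¬ (v ∈ A ∧ v ∈ B)) ∧
    ∀ ⦃x y⦄, G.Adj x y → (x ∈ A ∧ y ∈ B) ∨ (x ∈ B ∧ y ∈ A)

/-- The neighborhoods of any two distinct vertices of `S` are comparable under inclusion. -/
def ChainOn (G : SimpleGraph α) (S : Set α) : Prop :=
  ∀ u ∈ S, ∀ u' ∈ S, u ≠ u' →
    G.neighborSet u ⊆ G.neighborSet u' ∨ G.neighborSet u' ⊆ G.neighborSet u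

/-- An edge `uv` is bisimplicial: `N(u) ∪ N(v)` induces a complete bipartite subgraph. -/
def Bisimplicial (G : SimpleGraph α) (u v : α) : Prop :=
  G.Adj u v ∧ ∀ a b, G.Adj v a → G.Adj u b → a ≠ b → G.Adj a b

/-- A pending edge: an edge one of whose endpoints has degree one. -/
def PendingEdge (G : SimpleGraph α) (u v : α) : Prop :=
  G.Adj u v ∧ ((∃! w, G.Adj u w) ∨ (∃! w, G.Adj v w))

/-- A proper bisimplicial edge: bisimplicial and not pending. -/
def ProperBisimplicial (G : SimpleGraph α) (u v : α) : Prop :=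
  Bisimplicial G u v ∧ ¬ PendingEdge G u v

/-- `G` is distance hereditary: every connected induced subgraph inherits distances. -/
def DistHereditary (G : SimpleGraph α) : Prop :=
  ∀ U : Set α, (G.induce U).Connected →
    ∀ u v : U, (G.induce U).dist u v = G.dist (u : α) (v : α)

/-- `G` can be built by the Bandelt–Mulder construction: there is an ordering of its
vertices such that every vertex apart from the first one is, at the time of its insertion,
either a pending vertex (exactly one earlier neighbor) or a twin of an earlier vertex
(same earlier neighbors as that vertex). -/
def BMConstructible (G : SimpleGraph α) : Prop :=
  ∃ (n : ℕ) (e : Fin n ≃ α), ∀ i : Fin n, 0 < (i : ℕ) →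
    (∃! w, (∃ j : Fin n, (j : ℕ) < (i : ℕ) ∧ e j = w) ∧ G.Adj (e i) w) ∨
    (∃ j : Fin n, (j : ℕ) < (i : ℕ) ∧
      ∀ x, (∃ k : Fin n, (k : ℕ) < (i : ℕ) ∧ e k = x) → (G.Adj (e i) x ↔ G.Adj (e j) x))

/-- One pivot step: `H` is obtained from `G` by pivoting on an edge of `G`. -/
def PivotStep (G H : SimpleGraph α) : Prop := ∃ u v, G.Adj u v ∧ H = gpivot G u v

/-- `H` belongs to the pivot-orbit of `G`. -/
def InPivotOrbit (G H : SimpleGraph α) : Prop := Relation.ReflTransGen PivotStep G H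

/-- A balanced bipartite graph: every induced cycle of length at least 6 has length
divisible by 4. -/
def BalancedGraph (G : SimpleGraph α) : Prop :=
  ∀ n, 6 ≤ n → HasInducedCopy (SimpleGraph.cycleGraph n) G → n % 4 = 0

/-- `H` is a minor of `G`, via branch sets. -/
def HasMinor (G : SimpleGraph α) (H : SimpleGraph β) : Prop :=
  ∃ B : β → Set α, (∀ w, (B w).Nonempty) ∧ (∀ w, (G.induce (B w)).Connected) ∧
    (∀ w w', w ≠ w' → Disjoint (B w) (B w')) ∧
    ∀ w w', H.Adj w w' → ∃ a ∈ B w, ∃ b ∈ B w', G.Adj a b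

/-- Outer-planar graph, via the forbidden minor characterization: no `K₄` minor and
no `K_{2,3}` minor. -/
def OuterplanarGraph (G : SimpleGraph α) : Prop :=
  ¬ HasMinor G (completeGraph (Fin 4)) ∧
  ¬ HasMinor G (completeBipartiteGraph (Fin 2) (Fin 3))

/-- `G` is 2-connected: connected and still connected after deleting any one vertex. -/
def TwoConnected (G : SimpleGraph α) : Prop :=
  G.Connected ∧ ∀ v : α, ((⊤ : G.Subgraph).deleteVerts {v}).coe.Connected

/-- `G` is a path graph: a tree in which every vertex has at most two neighbors. -/
def IsPathGraph (G : SimpleGraph α) : Prop :=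
  G.IsTree ∧ ∀ v a b c : α, G.Adj v a → G.Adj v b → G.Adj v c → a = b ∨ a = c ∨ b = c

/-- An abstract plane embedding of a graph `H`: a type of faces with a distinguished
outer face, where each edge borders a pair of distinct faces, and every face is
bordered by some edge. -/
structure PlaneEmbedding (H : SimpleGraph α) where
  F : Type
  outer : F
  border : Sym2 α → Sym2 F
  border_ne : ∀ e ∈ H.edgeSet, ¬ (border e).IsDiag
  face_mem : ∀ f : F, ∃ e ∈ H.edgeSet, f ∈ border e

/-- The plane dual graph of an embedding: faces are adjacent when they share an edge. -/
def PlaneEmbedding.dualGraph {H : SimpleGraph α} (P : PlaneEmbedding H) : SimpleGraph P.F :=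
  SimpleGraph.fromEdgeSet (P.border '' H.edgeSet)

/-- The weak dual: the subgraph of the dual induced by the bounded (non-outer) faces. -/
def PlaneEmbedding.weakDual {H : SimpleGraph α} (P : PlaneEmbedding H) :=
  P.dualGraph.induce {f | f ≠ P.outer}

/-- Vertex `x` lies on face `f` of the embedding. -/
def PlaneEmbedding.OnFace {H : SimpleGraph α} (P : PlaneEmbedding H) (x : α) (f : P.F) : Prop :=
  ∃ w, H.Adj x w ∧ f ∈ P.border s(x, w)

/-- `S` is the arc set of a directed path inside the arc set `D`. -/
def IsDirectedPathSet {W : Type*} (D S : Set (W × W)) : Prop :=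
  S ⊆ D ∧ ∃ (k : ℕ) (w : Fin (k + 1) → W), Function.Injective w ∧
    S = {p | ∃ i : Fin k, p = (w i.castSucc, w i.succ)}


/-!
Because `xy` is bisimplicial, pivoting on it only deletes the edges between `N(x) \ {y}` and
`N(y) \ {x}`. Suppose `x` and `y` were still connected once `xy` is deleted as well, and take a
shortest `x`–`y` path `x = v₀, …, v_L = y` there. In `G` its vertices induce the cycle
`v₀ v₁ … v_L v₀` with the single chord `v₁v_{L-1}`: any other edge of `G` among them survives
both deletions and would shorten the path. Bipartiteness makes `L` odd; `L ≠ 1` as `xy` is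
deleted, and `L ≠ 3` as `v₁v₂` would be a deleted edge. So either `L = 5` and the six vertices
form a domino, or `L ≥ 7` and `v₁, …, v_{L-1}` is a hole.
-/

def cycleWithChord (L : ℕ) : SimpleGraph (Fin (L + 1)) :=
  SimpleGraph.fromRel fun i j =>
    i.val + 1 = j.val ∨ (i.val = 0 ∧ j.val = L) ∨ (i.val = 1 ∧ j.val = L - 1)

theorem HasInducedCopy.of_embedding {γ : Type*} {H : SimpleGraph β} {H' : SimpleGraph γ}
    {G : SimpleGraph α} (f : H ↪g H') (h : HasInducedCopy H' G) : HasInducedCopy H G := by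
  obtain ⟨g, hg⟩ := h
  exact ⟨f.toEmbedding.trans g, fun a b => (hg _ _).trans f.map_adj_iff⟩

theorem cycleGraph_adj_iff_val {n : ℕ} (hn : 2 ≤ n) {a b : Fin n} :
    (cycleGraph n).Adj a b ↔ a.val + 1 = b.val ∨ b.val + 1 = a.val ∨
      (a.val = 0 ∧ b.val = n - 1) ∨ (b.val = 0 ∧ a.val = n - 1) := by
  obtain ⟨m, rfl⟩ : ∃ m, n = m + 2 := ⟨n - 2, by omega⟩
  rw [cycleGraph_adj, sub_eq_iff_eq_add', sub_eq_iff_eq_add', Fin.ext_iff, Fin.ext_iff,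
    Fin.val_add_one, Fin.val_add_one]
  split_ifs <;> simp only [Fin.ext_iff, Fin.val_last] at * <;> omega

def cycleWithChord.dominoEmbedding : dominoGraph ↪g cycleWithChord 5 where
  toFun a := a + 1
  inj' := add_left_injective 1
  map_rel_iff' {a b} := by
    revert a b
    simp only [cycleWithChord, dominoGraph, fromRel_adj, fromEdgeSet_adj, Set.mem_insert_iff,
      Set.mem_singleton_iff, Sym2.eq_iff]
    decide

def cycleWithChord.cycleGraphEmbedding {L : ℕ} (hL : 3 ≤ L) :
    cycleGraph (L - 1) ↪g cycleWithChord L where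
  toFun a := ⟨a.val + 1, by omega⟩
  inj' a b h := by simpa [Fin.ext_iff] using h
  map_rel_iff' {a b} := by
    change (cycleWithChord L).Adj ⟨a.val + 1, _⟩ ⟨b.val + 1, _⟩ ↔ _
    rw [cycleGraph_adj_iff_val (by omega)]
    simp only [cycleWithChord, fromRel_adj, ne_eq, Fin.ext_iff]
    omega

namespace SimpleGraph.Walk

variable {V : Type*} {H : SimpleGraph V} {u w : V} {p : H.Walk u w}

theorem eq_add_one_of_adj_getVert (hp : p.length = H.dist u w) {i j : ℕ} (hij : i < j)
    (hj : j ≤ p.length) (h : H.Adj (p.getVert i) (p.getVert j)) : j = i + 1 := by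
  have := H.dist_le ((p.take i).append (.cons h (p.drop j)))
  simp only [length_append, take_length, length_cons, drop_length] at this
  omega

theorem eq_one_of_adj_start_getVert (hp : p.length = H.dist u w) {i : ℕ} (hi0 : 0 < i)
    (hi : i ≤ p.length) (h : H.Adj u (p.getVert i)) : i = 1 :=
  p.eq_add_one_of_adj_getVert hp hi0 hi (by rw [p.getVert_zero]; exact h)

theorem add_one_eq_of_adj_getVert_end (hp : p.length = H.dist u w) {i : ℕ} (hi : i < p.length)
    (h : H.Adj (p.getVert i) w) : i + 1 = p.length :=
  (p.eq_add_one_of_adj_getVert hp hi le_rfl (by rw [p.getVert_length]; exact h)).symm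

theorem eq_of_getVert_eq (hp : p.length = H.dist u w) {i j : ℕ} (hi : i ≤ p.length)
    (hj : j ≤ p.length) (h : p.getVert i = p.getVert j) : i = j :=
  (p.isPath_of_length_eq_dist hp).getVert_injOn hi hj h

theorem eq_zero_of_getVert_eq_start (hp : p.length = H.dist u w) {i : ℕ} (hi : i ≤ p.length)
    (h : p.getVert i = u) : i = 0 :=
  p.eq_of_getVert_eq hp hi (Nat.zero_le _) (h.trans p.getVert_zero.symm)

theorem eq_length_of_getVert_eq_end (hp : p.length = H.dist u w) {i : ℕ} (hi : i ≤ p.length)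
    (h : p.getVert i = w) : i = p.length :=
  p.eq_of_getVert_eq hp hi le_rfl (h.trans p.getVert_length.symm)

end SimpleGraph.Walk

theorem gpivot_comm (G : SimpleGraph α) (x y : α) : gpivot G x y = gpivot G y x := by
  ext a b
  have hswap : (G.Adj y a ∧ a ≠ x ∧ G.Adj x b ∧ b ≠ y ∨ G.Adj y b ∧ b ≠ x ∧ G.Adj x a ∧ a ≠ y) ↔
      (G.Adj x a ∧ a ≠ y ∧ G.Adj y b ∧ b ≠ x ∨ G.Adj x b ∧ b ≠ y ∧ G.Adj y a ∧ a ≠ x) := by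
    tauto
  simp only [gpivot, hswap]

namespace Bisimplicial

variable {G : SimpleGraph α} {x y : α}

theorem symm (h : Bisimplicial G x y) : Bisimplicial G y x :=
  ⟨h.1.symm, fun a b hxa hyb hab => (h.2 b a hyb hxa hab.symm).symm⟩

theorem gpivot_adj_iff (h : Bisimplicial G x y) {a b : α} :
    (gpivot G x y).Adj a b ↔ G.Adj a b ∧
      ¬ (G.Adj x a ∧ a ≠ y ∧ G.Adj y b ∧ b ≠ x) ∧ ¬ (G.Adj x b ∧ b ≠ y ∧ G.Adj y a ∧ a ≠ x) := by
  have hcross : (G.Adj x a ∧ a ≠ y ∧ G.Adj y b ∧ b ≠ x) ∨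
      (G.Adj x b ∧ b ≠ y ∧ G.Adj y a ∧ a ≠ x) → a ≠ b → G.Adj a b := by
    rintro (⟨hxa, -, hyb, -⟩ | ⟨hxb, -, hya, -⟩) hab
    · exact (h.2 b a hyb hxa hab.symm).symm
    · exact h.2 a b hya hxb hab
  simp only [gpivot]
  constructor
  · rintro ⟨hab, ⟨hadj, hnc⟩ | ⟨hc, hnadj⟩⟩
    · exact ⟨hadj, fun hc => hnc (Or.inl hc), fun hc => hnc (Or.inr hc)⟩
    · exact absurd (hcross hc hab) hnadj
  · rintro ⟨hadj, hc₁, hc₂⟩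
    exact ⟨hadj.ne, Or.inl ⟨hadj, by tauto⟩⟩

theorem deleteEdges_gpivot_le (h : Bisimplicial G x y) :
    (gpivot G x y).deleteEdges {s(x, y)} ≤ G :=
  fun _ _ hab => (h.gpivot_adj_iff.mp hab.1).1

theorem deleteEdges_gpivot_adj_left (h : Bisimplicial G x y) {a : α} (ha : G.Adj x a)
    (hay : a ≠ y) : ((gpivot G x y).deleteEdges {s(x, y)}).Adj x a := by
  refine ⟨h.gpivot_adj_iff.mpr ⟨ha, ?_, ?_⟩, ?_⟩
  · exact fun hc => G.loopless.irrefl x hc.1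
  · exact fun hc => hc.2.2.2 rfl
  · simp [hay, h.1.ne]

theorem odd_length (h : Bisimplicial G x y) (hcol : G.Colorable 2)
    (p : ((gpivot G x y).deleteEdges {s(x, y)}).Walk x y) : Odd p.length := by
  have := two_colorable_iff_forall_loop_even.mp hcol x
    ((p.mapLe h.deleteEdges_gpivot_le).concat h.1.symm)
  rw [Walk.length_concat, Walk.length_mapLe, Nat.even_add_one] at this
  exact Nat.not_even_iff_odd.mp this

variable {p : ((gpivot G x y).deleteEdges {s(x, y)}).Walk x y}

theorem one_lt_length (h : Bisimplicial G x y)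
    (hp : p.length = ((gpivot G x y).deleteEdges {s(x, y)}).dist x y) : 1 < p.length :=
  hp ▸ p.reachable.one_lt_dist_of_ne_of_not_adj h.1.ne
    fun hxy => (deleteEdges_adj.mp hxy).2 rfl

theorem eq_one_of_adj_left_getVert (h : Bisimplicial G x y)
    (hp : p.length = ((gpivot G x y).deleteEdges {s(x, y)}).dist x y) {i : ℕ}
    (hi : i ≤ p.length) (hx : G.Adj x (p.getVert i)) (hy : p.getVert i ≠ y) : i = 1 := by
  have hi0 : 0 < i := Nat.pos_of_ne_zero fun h0 => by
    subst h0; exact hx.ne p.getVert_zero.symm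
  exact p.eq_one_of_adj_start_getVert hp hi0 hi (h.deleteEdges_gpivot_adj_left hx hy)

theorem add_one_eq_of_adj_right_getVert (h : Bisimplicial G x y)
    (hp : p.length = ((gpivot G x y).deleteEdges {s(x, y)}).dist x y) {i : ℕ}
    (hi : i ≤ p.length) (hy : G.Adj y (p.getVert i)) (hx : p.getVert i ≠ x) :
    i + 1 = p.length := by
  have hadj := h.symm.deleteEdges_gpivot_adj_left hy hx
  rw [← gpivot_comm, Sym2.eq_swap] at hadj
  have hiL : i < p.length := lt_of_le_of_ne hi fun hL => by
    subst hL; exact hy.ne p.getVert_length.symm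
  exact p.add_one_eq_of_adj_getVert_end hp hiL hadj.symm

theorem adj_getVert_iff (h : Bisimplicial G x y)
    (hp : p.length = ((gpivot G x y).deleteEdges {s(x, y)}).dist x y) {i j : ℕ} (hij : i < j)
    (hj : j ≤ p.length) : G.Adj (p.getVert i) (p.getVert j) ↔
      j = i + 1 ∨ (i = 0 ∧ j = p.length) ∨ (i = 1 ∧ j = p.length - 1) := by
  have hle := h.deleteEdges_gpivot_le
  constructor
  · intro hadj
    by_cases hH : ((gpivot G x y).deleteEdges {s(x, y)}).Adj (p.getVert i) (p.getVert j)
    · exact Or.inl (p.eq_add_one_of_adj_getVert hp hij hj hH)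
    rw [deleteEdges_adj, h.gpivot_adj_iff, Set.mem_singleton_iff, Sym2.eq_iff] at hH
    have hcases : (G.Adj x (p.getVert i) ∧ p.getVert i ≠ y ∧ G.Adj y (p.getVert j) ∧
          p.getVert j ≠ x) ∨
        (G.Adj x (p.getVert j) ∧ p.getVert j ≠ y ∧ G.Adj y (p.getVert i) ∧ p.getVert i ≠ x) ∨
        (p.getVert i = x ∧ p.getVert j = y) ∨ (p.getVert i = y ∧ p.getVert j = x) := by
      tauto
    rcases hcases with ⟨hxi, hiy, hyj, hjx⟩ | ⟨hxj, hjy, -, hix⟩ | ⟨hix, hjy⟩ | ⟨-, hjx⟩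
    · have := h.eq_one_of_adj_left_getVert hp (by omega) hxi hiy
      have := h.add_one_eq_of_adj_right_getVert hp hj hyj hjx
      omega
    · have := h.eq_one_of_adj_left_getVert hp hj hxj hjy
      obtain rfl : i = 0 := by omega
      exact absurd p.getVert_zero hix
    · have := p.eq_zero_of_getVert_eq_start hp (by omega) hix
      have := p.eq_length_of_getVert_eq_end hp hj hjy
      omega
    · have := p.eq_zero_of_getVert_eq_start hp hj hjx
      omega
  · have hnil : ¬ p.Nil := Walk.not_nil_iff_lt_length.mpr (by omega)
    rintro (rfl | ⟨rfl, rfl⟩ | ⟨rfl, rfl⟩)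
    · exact hle (p.adj_getVert_succ (by omega))
    · simpa using h.1
    · refine (h.2 _ _ (hle (p.adj_penultimate hnil)).symm (hle (p.adj_snd hnil)) ?_).symm
      exact fun heq => by have := p.eq_of_getVert_eq hp (by omega) (by omega) heq; omega

theorem five_le_length (h : Bisimplicial G x y) (hcol : G.Colorable 2)
    (hp : p.length = ((gpivot G x y).deleteEdges {s(x, y)}).dist x y) : 5 ≤ p.length := by
  have h1 := h.one_lt_length hp
  have hnil : ¬ p.Nil := Walk.not_nil_iff_lt_length.mpr (by omega)
  have h3 : p.length ≠ 3 := by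
    intro h3
    have hy2 : G.Adj y (p.getVert 2) := by
      have := (h.deleteEdges_gpivot_le (p.adj_penultimate hnil)).symm
      rwa [Walk.penultimate, h3] at this
    refine (h.gpivot_adj_iff.mp (p.adj_getVert_succ (i := 1) (by omega)).1).2.1
      ⟨h.deleteEdges_gpivot_le (p.adj_snd hnil), fun hy => ?_, hy2, fun hx => ?_⟩
    · have := p.eq_length_of_getVert_eq_end hp (by omega) hy
      omega
    · have := p.eq_zero_of_getVert_eq_start hp (by omega) hx
      omega
  obtain ⟨k, hk⟩ := h.odd_length hcol p
  omega

theorem hasInducedCopy_cycleWithChord (h : Bisimplicial G x y)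
    (hp : p.length = ((gpivot G x y).deleteEdges {s(x, y)}).dist x y) :
    HasInducedCopy (cycleWithChord p.length) G := by
  have h1 := h.one_lt_length hp
  refine ⟨⟨fun a => p.getVert a, fun a b hab => ?_⟩, fun a b => ?_⟩
  · exact Fin.ext (p.eq_of_getVert_eq hp (by omega) (by omega) hab)
  change G.Adj (p.getVert a) (p.getVert b) ↔ _
  simp only [cycleWithChord, fromRel_adj, ne_eq, Fin.ext_iff]
  rcases lt_trichotomy a.val b.val with hab | hab | hab
  · rw [h.adj_getVert_iff hp hab (by omega)]
    omega
  · simp [hab]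
  · rw [G.adj_comm, h.adj_getVert_iff hp hab (by omega)]
    omega

end Bisimplicial

theorem stmt10 {α : Type*} (G : SimpleGraph α) (hG : IsBDH G) (x y : α)
    (hbis : Bisimplicial G x y) :
    ¬ ((gpivot G x y).deleteEdges {s(x, y)}).Connected := by
  obtain ⟨-, hcol, hhole, hdom⟩ := hG
  intro hconn
  obtain ⟨p, hp⟩ := (hconn.preconnected x y).exists_walk_length_eq_dist
  have hcopy := hbis.hasInducedCopy_cycleWithChord hp
  obtain ⟨k, hk⟩ := hbis.odd_length hcol p
  have h5 := hbis.five_le_length hcol hp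
  rcases (by omega : p.length = 5 ∨ 7 ≤ p.length) with h | h
  · rw [h] at hcopy
    exact hdom (hcopy.of_embedding cycleWithChord.dominoEmbedding)
  · exact hhole
      ⟨_, by omega, hcopy.of_embedding (cycleWithChord.cycleGraphEmbedding (by omega))⟩
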